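/- arXiv:1501.05085 — 6 statements merged into one kernel-verified Lean document; each statement's English description precedes it below -/
import Mathlib

section
/- There exists a 3-coloring of {1, 2, ..., 31} admitting no monochromatic solution of x₁² + x₂² + x₃² + x₄² = y₁² + y₂² + y₃²; i.e., there is a function χ : {1, ..., 31} → {1, 2, 3} such that no x₁, x₂, x₃, x₄, y₁, y₂, y₃ ∈ {1, ..., 31} all of one color satisfy x₁² + x₂² + x₃² + x₄² = y₁² + y₂² + y₃². -/
set_option maxRecDepth 100000
set_option maxHeartbeats 4000000

private def L : Fin 3 → List ℕ :=
  ![[1, 5, 7, 8, 11, 13, 17, 18, 19, 23, 29, 30, 31],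
    [4, 9, 14, 16, 20, 22, 26, 27, 28],
    [2, 3, 6, 10, 12, 15, 21, 24, 25]]

private def mask : Fin 3 → ℕ :=
  ![7404189054472383351273526463446335133483491904418905705888740674146864344259907309746457235874882016834390629167709382935075645113921227619881208810031961471315979686189342824619496358099910996266218990457290139994847835055182010050729592065568409119142909088389427998706635041619785506407390023388423612437176438414010411819631467256352101865259538215530102707219306880734703013079190839694666143521831394332562611078336943276778687487582235824633808997309957068263899173395359527652600308175863635213874861790204651973766917191653464213429029322912920574991015447184969602053125919243985786960561315344264086500030621871820988928648037298957175086976875548327263750426363377777930681574203792564549964201796868711223663260635074876644608028060373669005835171703830245556104116487865741209431247116609951504332614432462473987590755700585245788051336647200268640845832,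
    1053294464234888545027774483532414493872225465096496037317089900790322536685584835423692423154191236377367377136342552864990722583774997407171808632790130467162960526396994467268506293036438426775609630083014288571065350379338215761379154681516282142023091595308960025647655528024152791379377720428985473757689721339558864206142005659688209002111274213436403881332139841674701626777634445371594320850702926514082197930569465081680109794342254257800237083831505204750946816557143223684981708406081803923853976684849736886141337053667138176168068076042535251774438544311359155562067152253533560111271878658866519048338886005697046013723552693970282720930438228237469599459128547006894933249709555898658272051200,
    2699242292601107638691733861410068249826361146800500446666004236482559742026857667519869952094875534562759719231472963556994562767695098781035916922474483840496592794939434676556876749854134692031865166570136935606854184628088999780146057428373315348354290457647593778626266153862926025758681359126259856398498695655164861907233667831366856079293629382399409774004124404349298992658536756571065862365710105433721097203155357133994187917078583263526090743994916246070189739987167396975393996659752073958436256709174409882241945644323642180100195575634800057434378240]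

private def chi : ℕ → Fin 3 := fun n =>
  if n ∈ L 1 then 1 else if n ∈ L 2 then 2 else 0

private lemma memL : ∀ n ∈ List.range' 1 31, ∀ c : Fin 3, chi n = c → n ∈ L c := by
  decide

private lemma key3 : ∀ c : Fin 3, ∀ a ∈ L c, ∀ b ∈ L c, ∀ d ∈ L c,
    Nat.testBit (mask c) (a*a + b*b + d*d) = true := by decide

private lemma key4 : ∀ c : Fin 3, ∀ a ∈ L c, ∀ b ∈ L c, ∀ d ∈ L c, ∀ e ∈ L c,
    Nat.testBit (mask c) (a*a + b*b + d*d + e*e) = false := by decide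

/-- There is a 3-coloring of `{1, …, 31}` with no monochromatic solution of
`x₁² + x₂² + x₃² + x₄² = y₁² + y₂² + y₃²`. -/
theorem exists_three_coloring_31_no_mono_four_squares_eq_three_squares :
    ∃ χ : ℕ → Fin 3, ¬ ∃ (x : Fin 4 → ℕ) (y : Fin 3 → ℕ) (c : Fin 3),
      (∀ i, 1 ≤ x i ∧ x i ≤ 31) ∧ (∀ j, 1 ≤ y j ∧ y j ≤ 31) ∧
      (∀ i, χ (x i) = c) ∧ (∀ j, χ (y j) = c) ∧
      (∑ i, (x i) ^ 2) = ∑ j, (y j) ^ 2 := by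
  refine ⟨chi, ?_⟩
  rintro ⟨x, y, c, hx, hy, hxc, hyc, heq⟩
  have hrange : ∀ n, 1 ≤ n → n ≤ 31 → n ∈ List.range' 1 31 := by
    intro n h1 h2
    rw [List.mem_range'_1]
    omega
  have hxL : ∀ i, x i ∈ L c := fun i =>
    memL _ (hrange _ (hx i).1 (hx i).2) c (hxc i)
  have hyL : ∀ j, y j ∈ L c := fun j =>
    memL _ (hrange _ (hy j).1 (hy j).2) c (hyc j)
  have h4 : Nat.testBit (mask c) (x 0 * x 0 + x 1 * x 1 + x 2 * x 2 + x 3 * x 3) = false :=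
    key4 c _ (hxL 0) _ (hxL 1) _ (hxL 2) _ (hxL 3)
  have h3 : Nat.testBit (mask c) (y 0 * y 0 + y 1 * y 1 + y 2 * y 2) = true :=
    key3 c _ (hyL 0) _ (hyL 1) _ (hyL 2)
  rw [Fin.sum_univ_four, Fin.sum_univ_three] at heq
  simp only [pow_two] at heq
  rw [heq, h3] at h4
  simp at h4
end

section
/- The 2-color Rado number of the equation x₁² + x₂² + ... + x₇² = z² (seven squares summing to a square) equals 20: every 2-coloring of {1, ..., 20} admits a monochromatic solution, and there exists a 2-coloring of {1, ..., 19} with no monochromatic solution. -/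
/-- colors class A for the lower-bound coloring -/
def Acls : List ℕ := [1, 3, 4, 7, 8, 9, 12, 13]
def Bcls : List ℕ := [2, 5, 6, 10, 11, 14, 15, 16, 17, 18, 19]

def stepM (cls : List ℕ) (s : ℕ) : ℕ := cls.foldr (fun a acc => (s <<< (a * a)) ||| acc) 0

def reachM (cls : List ℕ) : ℕ → ℕ
  | 0 => 1
  | k + 1 => stepM cls (reachM cls k)

lemma testBit_stepM {a : ℕ} {cls : List ℕ} (ha : a ∈ cls) (s m : ℕ)
    (hm : s.testBit m = true) : (stepM cls s).testBit (a * a + m) = true := by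
  induction cls with
  | nil => cases ha
  | cons b t ih =>
    unfold stepM
    simp only [List.foldr, Nat.testBit_lor, Bool.or_eq_true]
    rcases List.mem_cons.mp ha with rfl | hat
    · left
      rw [Nat.testBit_shiftLeft]
      simp [hm]
    · right
      exact ih hat

lemma reach_spec (cls : List ℕ) : ∀ (k : ℕ) (x : Fin k → ℕ), (∀ i, x i ∈ cls) →
    (reachM cls k).testBit (∑ i, x i * x i) = true := by
  intro k
  induction k with
  | zero => intro x _; simp [reachM]
  | succ k ih =>
    intro x hx
    rw [Fin.sum_univ_succ]
    exact testBit_stepM (hx 0) _ _ (ih (fun i => x i.succ) (fun i => hx i.succ))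

set_option maxHeartbeats 2000000 in
def chk (m : ℕ) : Bool := (((m / 2 ^ 0 % 2 == m / 2 ^ 3 % 2) && (m / 2 ^ 1 % 2 == m / 2 ^ 3 % 2)) || (((m / 2 ^ 3 % 2 == m / 2 ^ 7 % 2) && (m / 2 ^ 4 % 2 == m / 2 ^ 7 % 2)) || (((m / 2 ^ 3 % 2 == m / 2 ^ 10 % 2) && (m / 2 ^ 5 % 2 == m / 2 ^ 10 % 2)) || (((m / 2 ^ 4 % 2 == m / 2 ^ 14 % 2) && (m / 2 ^ 6 % 2 == m / 2 ^ 14 % 2)) || (((m / 2 ^ 0 % 2 == m / 2 ^ 4 % 2) && (m / 2 ^ 1 % 2 == m / 2 ^ 4 % 2)) || (((m / 2 ^ 1 % 2 == m / 2 ^ 6 % 2) && (m / 2 ^ 3 % 2 == m / 2 ^ 6 % 2)) || (((m / 2 ^ 3 % 2 == m / 2 ^ 14 % 2) && (m / 2 ^ 5 % 2 == m / 2 ^ 14 % 2)) || (((m / 2 ^ 0 % 2 == m / 2 ^ 9 % 2) && ((m / 2 ^ 5 % 2 == m / 2 ^ 9 % 2) && (m / 2 ^ 6 % 2 == m / 2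 ^ 9 % 2))) || (((m / 2 ^ 1 % 2 == m / 2 ^ 9 % 2) && ((m / 2 ^ 4 % 2 == m / 2 ^ 9 % 2) && (m / 2 ^ 5 % 2 == m / 2 ^ 9 % 2))) || (((m / 2 ^ 1 % 2 == m / 2 ^ 14 % 2) && ((m / 2 ^ 5 % 2 == m / 2 ^ 14 % 2) && (m / 2 ^ 10 % 2 == m / 2 ^ 14 % 2))) || (((m / 2 ^ 0 % 2 == m / 2 ^ 13 % 2) && ((m / 2 ^ 6 % 2 == m / 2 ^ 13 % 2) && (m / 2 ^ 10 % 2 == m / 2 ^ 13 % 2))) || (((m / 2 ^ 1 % 2 == m / 2 ^ 14 % 2) && ((m / 2 ^ 2 % 2 == m / 2 ^ 14 % 2) && (m / 2 ^ 13 % 2 == m / 2 ^ 14 % 2))) || (((m / 2 ^ 3 % 2 == m / 2 ^ 13 % 2) && ((m / 2 ^ 4 % 2 == m / 2 ^ 13 % 2) && (m / 2 ^ 10 % 2 == m / 2 ^ 13 % 2))) || (((m / 2 ^ 1 % 2 == m / 2 ^ 13 % 2) && ((m / 2 ^ 5 % 2 == m / 2 ^ 13 % 2) && ((m / 2 ^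 6 % 2 == m / 2 ^ 13 % 2) && (m / 2 ^ 7 % 2 == m / 2 ^ 13 % 2)))) || (((m / 2 ^ 3 % 2 == m / 2 ^ 13 % 2) && ((m / 2 ^ 4 % 2 == m / 2 ^ 13 % 2) && (m / 2 ^ 5 % 2 == m / 2 ^ 13 % 2))) || (((m / 2 ^ 1 % 2 == m / 2 ^ 11 % 2) && ((m / 2 ^ 4 % 2 == m / 2 ^ 11 % 2) && (m / 2 ^ 5 % 2 == m / 2 ^ 11 % 2))) || (((m / 2 ^ 1 % 2 == m / 2 ^ 10 % 2) && ((m / 2 ^ 4 % 2 == m / 2 ^ 10 % 2) && (m / 2 ^ 9 % 2 == m / 2 ^ 10 % 2))) || (((m / 2 ^ 0 % 2 == m / 2 ^ 11 % 2) && ((m / 2 ^ 3 % 2 == m / 2 ^ 11 % 2) && ((m / 2 ^ 6 % 2 == m / 2 ^ 11 % 2) && (m / 2 ^ 9 % 2 == m / 2 ^ 11 % 2)))) || (((m / 2 ^ 2 % 2 == m / 2 ^ 6 % 2) && ((m / 2 ^ 3 % 2 == m / 2 ^ 6 % 2) && (m / 2 ^ 4 % 2 == m / 2 ^ 6 % 2)))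 || (((m / 2 ^ 0 % 2 == m / 2 ^ 10 % 2) && ((m / 2 ^ 2 % 2 == m / 2 ^ 10 % 2) && ((m / 2 ^ 5 % 2 == m / 2 ^ 10 % 2) && (m / 2 ^ 6 % 2 == m / 2 ^ 10 % 2)))) || (((m / 2 ^ 1 % 2 == m / 2 ^ 9 % 2) && ((m / 2 ^ 3 % 2 == m / 2 ^ 9 % 2) && (m / 2 ^ 7 % 2 == m / 2 ^ 9 % 2))) || (((m / 2 ^ 1 % 2 == m / 2 ^ 5 % 2) && ((m / 2 ^ 2 % 2 == m / 2 ^ 5 % 2) && (m / 2 ^ 4 % 2 == m / 2 ^ 5 % 2))) || (((m / 2 ^ 2 % 2 == m / 2 ^ 13 % 2) && ((m / 2 ^ 3 % 2 == m / 2 ^ 13 % 2) && (m / 2 ^ 8 % 2 == m / 2 ^ 13 % 2))) || (((m / 2 ^ 0 % 2 == m / 2 ^ 11 % 2) && ((m / 2 ^ 5 % 2 == m / 2 ^ 11 % 2) && ((m / 2 ^ 6 % 2 == m / 2 ^ 11 % 2) && (m / 2 ^ 7 % 2 == m / 2 ^ 11 % 2)))) || (((m / 2 ^ 1 % 2 ==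 m / 2 ^ 10 % 2) && ((m / 2 ^ 2 % 2 == m / 2 ^ 10 % 2) && ((m / 2 ^ 6 % 2 == m / 2 ^ 10 % 2) && (m / 2 ^ 7 % 2 == m / 2 ^ 10 % 2)))) || (((m / 2 ^ 1 % 2 == m / 2 ^ 12 % 2) && ((m / 2 ^ 5 % 2 == m / 2 ^ 12 % 2) && ((m / 2 ^ 6 % 2 == m / 2 ^ 12 % 2) && (m / 2 ^ 8 % 2 == m / 2 ^ 12 % 2)))) || (((m / 2 ^ 0 % 2 == m / 2 ^ 13 % 2) && ((m / 2 ^ 2 % 2 == m / 2 ^ 13 % 2) && ((m / 2 ^ 3 % 2 == m / 2 ^ 13 % 2) && (m / 2 ^ 12 % 2 == m / 2 ^ 13 % 2)))) || (((m / 2 ^ 0 % 2 == m / 2 ^ 11 % 2) && ((m / 2 ^ 3 % 2 == m / 2 ^ 11 % 2) && (m / 2 ^ 5 % 2 == m / 2 ^ 11 % 2))) || (((m / 2 ^ 0 % 2 == m / 2 ^ 13 % 2) && ((m / 2 ^ 4 % 2 == m / 2 ^ 13 % 2) && ((m / 2 ^ 5 % 2 == m / 2 ^ 13 % 2) && ((m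 / 2 ^ 6 % 2 == m / 2 ^ 13 % 2) && (m / 2 ^ 7 % 2 == m / 2 ^ 13 % 2))))) || (((m / 2 ^ 1 % 2 == m / 2 ^ 13 % 2) && ((m / 2 ^ 3 % 2 == m / 2 ^ 13 % 2) && (m / 2 ^ 11 % 2 == m / 2 ^ 13 % 2))) || (((m / 2 ^ 1 % 2 == m / 2 ^ 13 % 2) && ((m / 2 ^ 4 % 2 == m / 2 ^ 13 % 2) && ((m / 2 ^ 5 % 2 == m / 2 ^ 13 % 2) && (m / 2 ^ 6 % 2 == m / 2 ^ 13 % 2)))) || (((m / 2 ^ 1 % 2 == m / 2 ^ 11 % 2) && ((m / 2 ^ 6 % 2 == m / 2 ^ 11 % 2) && (m / 2 ^ 9 % 2 == m / 2 ^ 11 % 2))) || (((m / 2 ^ 3 % 2 == m / 2 ^ 9 % 2) && ((m / 2 ^ 4 % 2 == m / 2 ^ 9 % 2) && (m / 2 ^ 5 % 2 == m / 2 ^ 9 % 2))) || ((m / 2 ^ 0 % 2 == m / 2 ^ 10 % 2) && ((m / 2 ^ 1 % 2 == m / 2 ^ 10 % 2) && ((m / 2 ^ 5 % 2 == m / 2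 ^ 10 % 2) && (m / 2 ^ 7 % 2 == m / 2 ^ 10 % 2)))))))))))))))))))))))))))))))))))))

def Fc : ℕ → ℕ → Bool
  | lo, 0 => chk lo
  | lo, n + 1 => Fc lo n && Fc (lo + 2 ^ n) n

lemma Fc_spec : ∀ (n lo : ℕ), Fc lo n = true → ∀ m, lo ≤ m → m < lo + 2 ^ n → chk m = true := by
  intro n
  induction n with
  | zero =>
    intro lo h m h1 h2
    simp only [pow_zero] at h2
    have : m = lo := by omega
    subst this
    simpa [Fc] using h
  | succ n ih =>
    intro lo h m h1 h2
    rw [Fc] at h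
    rw [Bool.and_eq_true] at h
    have hb := h
    have hp : 2 ^ (n + 1) = 2 ^ n + 2 ^ n := by ring
    by_cases hm : m < lo + 2 ^ n
    · exact ih lo hb.1 m h1 hm
    · exact ih (lo + 2 ^ n) hb.2 m (by omega) (by omega)

def encB : List Bool → ℕ
  | [] => 0
  | b :: t => b.toNat + 2 * encB t

lemma enc_lt : ∀ l : List Bool, encB l < 2 ^ l.length := by
  intro l
  induction l with
  | nil => simp [encB]
  | cons b t ih =>
    simp only [encB, List.length_cons, pow_succ]
    cases b <;> simp [Bool.toNat] <;> omega

lemma enc_testBit : ∀ (l : List Bool) (i : ℕ), (encB l).testBit i = l.getD i false := by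
  intro l
  induction l with
  | nil => intro i; simp [encB, Nat.zero_testBit]
  | cons b t ih =>
    intro i
    cases i with
    | zero =>
      show (b.toNat + 2 * encB t).testBit 0 = b
      rw [Nat.testBit_zero]
      cases b <;> simp [Bool.toNat, Nat.add_mul_mod_self_left]
    | succ i =>
      show (b.toNat + 2 * encB t).testBit (i + 1) = t.getD i false
      rw [Nat.testBit_succ]
      have : (b.toNat + 2 * encB t) / 2 = encB t := by cases b <;> simp [Bool.toNat] <;> omega
      rw [this, ih]

lemma encB_div : ∀ (l : List Bool) (j : ℕ), encB l / 2 ^ j % 2 = (l.getD j false).toNat := by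
  intro l
  induction l with
  | nil => intro j; simp [encB]
  | cons b t ih =>
    intro j
    cases j with
    | zero =>
      show (b.toNat + 2 * encB t) / 2 ^ 0 % 2 = (b.toNat : ℕ)
      rw [pow_zero, Nat.div_one]
      cases b <;> simp [Bool.toNat, Nat.add_mul_mod_self_left]
    | succ j =>
      show (b.toNat + 2 * encB t) / 2 ^ (j + 1) % 2 = (t.getD j false).toNat
      rw [pow_succ', ← Nat.div_div_eq_div_mul]
      have h2 : (b.toNat + 2 * encB t) / 2 = encB t := by
        cases b <;> simp [Bool.toNat] <;> omega
      rw [h2, ih]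

lemma fin2N : ∀ a b : Fin 2, ((a == 0).toNat = (b == 0).toNat) → a = b := by decide

set_option maxHeartbeats 4000000 in
lemma Fval : Fc 0 15 = true := by decide

lemma fin2 : ∀ a b : Fin 2, ((a == 0) = (b == 0)) → a = b := by decide

lemma factA : ∀ z ∈ Acls, (reachM Acls 7).testBit (z * z) = false := by decide

lemma factB : ∀ z ∈ Bcls, (reachM Bcls 7).testBit (z * z) = false := by decide

lemma memB : ∀ n < 20, 1 ≤ n → n ∉ Acls → n ∈ Bcls := by decide

/-- The 2-color Rado number of `x₁² + ⋯ + x_7² = z²` equals 20: every 2-coloring of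
`{1, …, 20}` admits a monochromatic solution, and there exists a 2-coloring of
`{1, …, 19}` with no monochromatic solution. -/
theorem rado_number_two_colors_sum_7_squares_eq_square :
    (∀ χ : ℕ → Fin 2, ∃ (x : Fin 7 → ℕ) (z : ℕ),
      (∀ i, 1 ≤ x i ∧ x i ≤ 20) ∧ 1 ≤ z ∧ z ≤ 20 ∧
      (∀ i, χ (x i) = χ z) ∧ (∑ i, (x i) ^ 2) = z ^ 2) ∧
    (∃ χ : ℕ → Fin 2, ¬ ∃ (x : Fin 7 → ℕ) (z : ℕ),
      (∀ i, 1 ≤ x i ∧ x i ≤ 19) ∧ 1 ≤ z ∧ z ≤ 19 ∧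
      (∀ i, χ (x i) = χ z) ∧ (∑ i, (x i) ^ 2) = z ^ 2) := by
  constructor
  · intro χ
    set L : List Bool := [χ 1 == 0, χ 2 == 0, χ 3 == 0, χ 4 == 0, χ 5 == 0, χ 8 == 0, χ 10 == 0, χ 11 == 0, χ 12 == 0, χ 13 == 0, χ 16 == 0, χ 17 == 0, χ 18 == 0, χ 19 == 0, χ 20 == 0] with hL
    have hc : chk (encB L) = true := by
      have hlen : L.length = 15 := by rw [hL]; rfl
      exact Fc_spec 15 0 Fval _ (Nat.zero_le _) (by simpa [hlen] using enc_lt L)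
    have b0 : encB L / 2 ^ 0 % 2 = (χ 1 == 0).toNat := by rw [encB_div, hL]; rfl
    have b1 : encB L / 2 ^ 1 % 2 = (χ 2 == 0).toNat := by rw [encB_div, hL]; rfl
    have b2 : encB L / 2 ^ 2 % 2 = (χ 3 == 0).toNat := by rw [encB_div, hL]; rfl
    have b3 : encB L / 2 ^ 3 % 2 = (χ 4 == 0).toNat := by rw [encB_div, hL]; rfl
    have b4 : encB L / 2 ^ 4 % 2 = (χ 5 == 0).toNat := by rw [encB_div, hL]; rfl
    have b5 : encB L / 2 ^ 5 % 2 = (χ 8 == 0).toNat := by rw [encB_div, hL]; rfl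
    have b6 : encB L / 2 ^ 6 % 2 = (χ 10 == 0).toNat := by rw [encB_div, hL]; rfl
    have b7 : encB L / 2 ^ 7 % 2 = (χ 11 == 0).toNat := by rw [encB_div, hL]; rfl
    have b8 : encB L / 2 ^ 8 % 2 = (χ 12 == 0).toNat := by rw [encB_div, hL]; rfl
    have b9 : encB L / 2 ^ 9 % 2 = (χ 13 == 0).toNat := by rw [encB_div, hL]; rfl
    have b10 : encB L / 2 ^ 10 % 2 = (χ 16 == 0).toNat := by rw [encB_div, hL]; rfl
    have b11 : encB L / 2 ^ 11 % 2 = (χ 17 == 0).toNat := by rw [encB_div, hL]; rfl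
    have b12 : encB L / 2 ^ 12 % 2 = (χ 18 == 0).toNat := by rw [encB_div, hL]; rfl
    have b13 : encB L / 2 ^ 13 % 2 = (χ 19 == 0).toNat := by rw [encB_div, hL]; rfl
    have b14 : encB L / 2 ^ 14 % 2 = (χ 20 == 0).toNat := by rw [encB_div, hL]; rfl
    rw [chk] at hc
    simp only [b0, b1, b2, b3, b4, b5, b6, b7, b8, b9, b10, b11, b12, b13, b14] at hc
    simp only [Bool.or_eq_true, Bool.and_eq_true, beq_iff_eq] at hc
    obtain ⟨e1,e2⟩|⟨e1,e2⟩|⟨e1,e2⟩|⟨e1,e2⟩|⟨e1,e2⟩|⟨e1,e2⟩|⟨e1,e2⟩|⟨e1,e2,e3⟩|⟨e1,e2,e3⟩|⟨e1,e2,e3⟩|⟨e1,e2,e3⟩|⟨e1,e2,e3⟩|⟨e1,e2,e3⟩|⟨e1,e2,e3,e4⟩|⟨e1,e2,e3⟩|⟨e1,e2,e3⟩|⟨e1,e2,e3⟩|⟨e1,e2,e3,e4⟩|⟨e1,e2,e3⟩|⟨e1,e2,e3,e4⟩|⟨e1,e2,e3⟩|⟨e1,e2,e3⟩|⟨e1,e2,e3⟩|⟨e1,e2,e3,e4⟩|⟨e1,e2,e3,e4⟩|⟨e1,e2,e3,e4⟩|⟨e1,e2,e3,e4⟩|⟨e1,e2,e3⟩|⟨e1,e2,e3,e4,e5⟩|⟨e1,e2,e3⟩|⟨e1,e2,e3,e4⟩|⟨e1,e2,e3⟩|⟨e1,e2,e3⟩|⟨e1,e2,e3,e4⟩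 := hc
    · exact ⟨![1,1,1,1,2,2,2], 4, by decide, by norm_num, by norm_num,
        by intro i; fin_cases i <;> first | rfl | exact fin2N _ _ e1 | exact fin2N _ _ e2, by decide⟩
    · exact ⟨![4,4,4,4,4,4,5], 11, by decide, by norm_num, by norm_num,
        by intro i; fin_cases i <;> first | rfl | exact fin2N _ _ e1 | exact fin2N _ _ e2, by decide⟩
    · exact ⟨![4,4,4,4,8,8,8], 16, by decide, by norm_num, by norm_num,
        by intro i; fin_cases i <;> first | rfl | exact fin2N _ _ e1 | exact fin2N _ _ e2, by decide⟩
    · exact ⟨![5,5,5,5,10,10,10], 20, by decide, by norm_num, by norm_num,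
        by intro i; fin_cases i <;> first | rfl | exact fin2N _ _ e1 | exact fin2N _ _ e2, by decide⟩
    · exact ⟨![1,2,2,2,2,2,2], 5, by decide, by norm_num, by norm_num,
        by intro i; fin_cases i <;> first | rfl | exact fin2N _ _ e1 | exact fin2N _ _ e2, by decide⟩
    · exact ⟨![2,4,4,4,4,4,4], 10, by decide, by norm_num, by norm_num,
        by intro i; fin_cases i <;> first | rfl | exact fin2N _ _ e1 | exact fin2N _ _ e2, by decide⟩
    · exact ⟨![4,8,8,8,8,8,8], 20, by decide, by norm_num, by norm_num,
        by intro i; fin_cases i <;> first | rfl | exact fin2N _ _ e1 | exact fin2N _ _ e2, by decide⟩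
    · exact ⟨![1,1,1,1,1,8,10], 13, by decide, by norm_num, by norm_num,
        by intro i; fin_cases i <;> first | rfl | exact fin2N _ _ e1 | exact fin2N _ _ e2 | exact fin2N _ _ e3, by decide⟩
    · exact ⟨![2,2,2,2,5,8,8], 13, by decide, by norm_num, by norm_num,
        by intro i; fin_cases i <;> first | rfl | exact fin2N _ _ e1 | exact fin2N _ _ e2 | exact fin2N _ _ e3, by decide⟩
    · exact ⟨![2,2,2,2,8,8,16], 20, by decide, by norm_num, by norm_num,
        by intro i; fin_cases i <;> first | rfl | exact fin2N _ _ e1 | exact fin2N _ _ e2 | exact fin2N _ _ e3, by decide⟩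
    · exact ⟨![1,1,1,1,1,10,16], 19, by decide, by norm_num, by norm_num,
        by intro i; fin_cases i <;> first | rfl | exact fin2N _ _ e1 | exact fin2N _ _ e2 | exact fin2N _ _ e3, by decide⟩
    · exact ⟨![2,2,2,3,3,3,19], 20, by decide, by norm_num, by norm_num,
        by intro i; fin_cases i <;> first | rfl | exact fin2N _ _ e1 | exact fin2N _ _ e2 | exact fin2N _ _ e3, by decide⟩
    · exact ⟨![4,4,4,4,4,5,16], 19, by decide, by norm_num, by norm_num,
        by intro i; fin_cases i <;> first | rfl | exact fin2N _ _ e1 | exact fin2N _ _ e2 | exact fin2N _ _ e3, by decide⟩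
    · exact ⟨![2,2,2,8,8,10,11], 19, by decide, by norm_num, by norm_num,
        by intro i; fin_cases i <;> first | rfl | exact fin2N _ _ e1 | exact fin2N _ _ e2 | exact fin2N _ _ e3 | exact fin2N _ _ e4, by decide⟩
    · exact ⟨![4,5,8,8,8,8,8], 19, by decide, by norm_num, by norm_num,
        by intro i; fin_cases i <;> first | rfl | exact fin2N _ _ e1 | exact fin2N _ _ e2 | exact fin2N _ _ e3, by decide⟩
    · exact ⟨![2,2,5,8,8,8,8], 17, by decide, by norm_num, by norm_num,
        by intro i; fin_cases i <;> first | rfl | exact fin2N _ _ e1 | exact fin2N _ _ e2 | exact fin2N _ _ e3, by decide⟩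
    · exact ⟨![2,2,2,5,5,5,13], 16, by decide, by norm_num, by norm_num,
        by intro i; fin_cases i <;> first | rfl | exact fin2N _ _ e1 | exact fin2N _ _ e2 | exact fin2N _ _ e3, by decide⟩
    · exact ⟨![1,1,1,1,4,10,13], 17, by decide, by norm_num, by norm_num,
        by intro i; fin_cases i <;> first | rfl | exact fin2N _ _ e1 | exact fin2N _ _ e2 | exact fin2N _ _ e3 | exact fin2N _ _ e4, by decide⟩
    · exact ⟨![3,3,3,4,4,4,5], 10, by decide, by norm_num, by norm_num,
        by intro i; fin_cases i <;> first | rfl | exact fin2N _ _ e1 | exact fin2N _ _ e2 | exact fin2N _ _ e3, by decide⟩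
    · exact ⟨![1,3,3,3,8,8,10], 16, by decide, by norm_num, by norm_num,
        by intro i; fin_cases i <;> first | rfl | exact fin2N _ _ e1 | exact fin2N _ _ e2 | exact fin2N _ _ e3 | exact fin2N _ _ e4, by decide⟩
    · exact ⟨![2,2,2,2,4,4,11], 13, by decide, by norm_num, by norm_num,
        by intro i; fin_cases i <;> first | rfl | exact fin2N _ _ e1 | exact fin2N _ _ e2 | exact fin2N _ _ e3, by decide⟩
    · exact ⟨![2,2,2,3,3,3,5], 8, by decide, by norm_num, by norm_num,
        by intro i; fin_cases i <;> first | rfl | exact fin2N _ _ e1 | exact fin2N _ _ e2 | exact fin2N _ _ e3, by decide⟩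
    · exact ⟨![3,4,4,4,4,12,12], 19, by decide, by norm_num, by norm_num,
        by intro i; fin_cases i <;> first | rfl | exact fin2N _ _ e1 | exact fin2N _ _ e2 | exact fin2N _ _ e3, by decide⟩
    · exact ⟨![1,1,1,1,8,10,11], 17, by decide, by norm_num, by norm_num,
        by intro i; fin_cases i <;> first | rfl | exact fin2N _ _ e1 | exact fin2N _ _ e2 | exact fin2N _ _ e3 | exact fin2N _ _ e4, by decide⟩
    · exact ⟨![2,2,3,3,3,10,11], 16, by decide, by norm_num, by norm_num,
        by intro i; fin_cases i <;> first | rfl | exact fin2N _ _ e1 | exact fin2N _ _ e2 | exact fin2N _ _ e3 | exact fin2N _ _ e4, by decide⟩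
    · exact ⟨![2,2,2,2,8,10,12], 18, by decide, by norm_num, by norm_num,
        by intro i; fin_cases i <;> first | rfl | exact fin2N _ _ e1 | exact fin2N _ _ e2 | exact fin2N _ _ e3 | exact fin2N _ _ e4, by decide⟩
    · exact ⟨![1,1,1,3,3,4,18], 19, by decide, by norm_num, by norm_num,
        by intro i; fin_cases i <;> first | rfl | exact fin2N _ _ e1 | exact fin2N _ _ e2 | exact fin2N _ _ e3 | exact fin2N _ _ e4, by decide⟩
    · exact ⟨![1,4,4,8,8,8,8], 17, by decide, by norm_num, by norm_num,
        by intro i; fin_cases i <;> first | rfl | exact fin2N _ _ e1 | exact fin2N _ _ e2 | exact fin2N _ _ e3, by decide⟩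
    · exact ⟨![1,5,5,5,8,10,11], 19, by decide, by norm_num, by norm_num,
        by intro i; fin_cases i <;> first | rfl | exact fin2N _ _ e1 | exact fin2N _ _ e2 | exact fin2N _ _ e3 | exact fin2N _ _ e4 | exact fin2N _ _ e5, by decide⟩
    · exact ⟨![2,2,4,4,4,4,17], 19, by decide, by norm_num, by norm_num,
        by intro i; fin_cases i <;> first | rfl | exact fin2N _ _ e1 | exact fin2N _ _ e2 | exact fin2N _ _ e3, by decide⟩
    · exact ⟨![2,2,5,8,8,10,10], 19, by decide, by norm_num, by norm_num,
        by intro i; fin_cases i <;> first | rfl | exact fin2N _ _ e1 | exact fin2N _ _ e2 | exact fin2N _ _ e3 | exact fin2N _ _ e4, by decide⟩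
    · exact ⟨![2,2,2,2,2,10,13], 17, by decide, by norm_num, by norm_num,
        by intro i; fin_cases i <;> first | rfl | exact fin2N _ _ e1 | exact fin2N _ _ e2 | exact fin2N _ _ e3, by decide⟩
    · exact ⟨![4,4,4,4,4,5,8], 13, by decide, by norm_num, by norm_num,
        by intro i; fin_cases i <;> first | rfl | exact fin2N _ _ e1 | exact fin2N _ _ e2 | exact fin2N _ _ e3, by decide⟩
    · exact ⟨![1,1,1,2,8,8,11], 16, by decide, by norm_num, by norm_num,
        by intro i; fin_cases i <;> first | rfl | exact fin2N _ _ e1 | exact fin2N _ _ e2 | exact fin2N _ _ e3 | exact fin2N _ _ e4, by decide⟩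
  · refine ⟨fun n => if n ∈ Acls then 0 else 1, ?_⟩
    rintro ⟨x, z, hx, hz1, hz19, hcol, hsum⟩
    have hmul : (∑ i, x i * x i) = z * z := by
      simpa [pow_two] using hsum
    by_cases hz : z ∈ Acls
    · have hxA : ∀ i, x i ∈ Acls := by
        intro i
        have := hcol i
        simp only [hz, if_pos] at this
        by_contra hni
        rw [if_neg hni] at this
        exact absurd this (by decide)
      have h1 := reach_spec Acls 7 x hxA
      rw [hmul] at h1
      rw [factA z hz] at h1
      exact absurd h1 (by simp)
    · have hzB : z ∈ Bcls := memB z (by omega) hz1 hz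
      have hxB : ∀ i, x i ∈ Bcls := by
        intro i
        have hci := hcol i
        simp only [if_neg hz] at hci
        have hni : x i ∉ Acls := by
          intro hmem
          rw [if_pos hmem] at hci
          exact absurd hci (by decide)
        exact memB (x i) (by have := (hx i).2; omega) (hx i).1 hni
      have h1 := reach_spec Bcls 7 x hxB
      rw [hmul] at h1
      rw [factB z hzB] at h1
      exact absurd h1 (by simp)
end

section
/- The 2-color Rado number of the equation x₁² + x₂² + ... + x₉² = z² (nine squares summing to a square) equals 15: every 2-coloring of {1, ..., 15} admits a monochromatic solution, and there exists a 2-coloring of {1, ..., 14} with no monochromatic solution. -/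
private lemma key2 : ∀ a b c d e f g h i j : Fin 2,
    a = c ∨ b = e ∨ c = h ∨ (a = i ∧ h = i) ∨ (a = h ∧ d = h) ∨
    (c = i ∧ d = i ∧ f = i) ∨ (b = h ∧ f = h) ∨ (b = i ∧ c = i ∧ d = i ∧ g = i) ∨
    (a = j ∧ e = j ∧ f = j ∧ g = j) ∨ d = j := by decide

private lemma fiber_sum {n : ℕ} (x : Fin n → ℕ) (S : Finset ℕ) (h : ∀ i, x i ∈ S)
    (f : ℕ → ℕ) :
    ∑ v ∈ S, (Finset.univ.filter (fun i => x i = v)).card * f v = ∑ i, f (x i) := by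
  rw [← Finset.sum_fiberwise_of_maps_to (fun i _ => h i) (fun i => f (x i))]
  refine Finset.sum_congr rfl fun v _ => ?_
  rw [Finset.sum_congr rfl (fun i hi => by rw [(Finset.mem_filter.1 hi).2]),
      Finset.sum_const, smul_eq_mul, mul_comm]

private lemma decB : ∀ (b c d : Fin 10) (e : Fin 2),
    b.val + c.val + d.val + e.val ≤ 9 →
    4*(9 - (b.val + c.val + d.val + e.val)) + 9*b.val + 16*c.val + 25*d.val + 169*e.val ≠ 169 := by
  decide

private lemma decA : ∀ (b : Fin 6) (c d : Fin 4) (e : Fin 3) (f g h i : Fin 2),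
    b.val + c.val + d.val + e.val + f.val + g.val + h.val + i.val ≤ 9 →
    ((9 - (b.val + c.val + d.val + e.val + f.val + g.val + h.val + i.val)) +
      36*b.val + 49*c.val + 64*d.val + 81*e.val + 100*f.val + 121*g.val + 144*h.val + 196*i.val ≠ 36 ∧
     (9 - (b.val + c.val + d.val + e.val + f.val + g.val + h.val + i.val)) +
      36*b.val + 49*c.val + 64*d.val + 81*e.val + 100*f.val + 121*g.val + 144*h.val + 196*i.val ≠ 49 ∧
     (9 - (b.val + c.val + d.val + e.val + f.val + g.val + h.val + i.val)) +
      36*b.val + 49*c.val + 64*d.val + 81*e.val + 100*f.val + 121*g.val + 144*h.val + 196*i.val ≠ 64 ∧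
     (9 - (b.val + c.val + d.val + e.val + f.val + g.val + h.val + i.val)) +
      36*b.val + 49*c.val + 64*d.val + 81*e.val + 100*f.val + 121*g.val + 144*h.val + 196*i.val ≠ 81 ∧
     (9 - (b.val + c.val + d.val + e.val + f.val + g.val + h.val + i.val)) +
      36*b.val + 49*c.val + 64*d.val + 81*e.val + 100*f.val + 121*g.val + 144*h.val + 196*i.val ≠ 100 ∧
     (9 - (b.val + c.val + d.val + e.val + f.val + g.val + h.val + i.val)) +
      36*b.val + 49*c.val + 64*d.val + 81*e.val + 100*f.val + 121*g.val + 144*h.val + 196*i.val ≠ 121 ∧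
     (9 - (b.val + c.val + d.val + e.val + f.val + g.val + h.val + i.val)) +
      36*b.val + 49*c.val + 64*d.val + 81*e.val + 100*f.val + 121*g.val + 144*h.val + 196*i.val ≠ 144 ∧
     (9 - (b.val + c.val + d.val + e.val + f.val + g.val + h.val + i.val)) +
      36*b.val + 49*c.val + 64*d.val + 81*e.val + 100*f.val + 121*g.val + 144*h.val + 196*i.val ≠ 196) := by
  decide

private lemma keyB (T n2 n3 n4 n5 n13 : ℕ)
    (hT : T = 4 ∨ T = 9 ∨ T = 16 ∨ T = 25 ∨ T = 169)
    (hs : n2 + n3 + n4 + n5 + n13 = 9)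
    (heq : 4*n2 + 9*n3 + 16*n4 + 25*n5 + 169*n13 = T) : False := by
  have b3 : n3 < 10 := by omega
  have b4 : n4 < 10 := by omega
  have b5 : n5 < 10 := by omega
  have b13 : n13 < 2 := by omega
  have hg : n3 + n4 + n5 + n13 ≤ 9 := by clear hT heq; omega
  have H : 4*(9 - (n3 + n4 + n5 + n13)) + 9*n3 + 16*n4 + 25*n5 + 169*n13 ≠ 169 :=
    decB ⟨n3, b3⟩ ⟨n4, b4⟩ ⟨n5, b5⟩ ⟨n13, b13⟩ hg
  omega

private lemma boundsA (T n1 n6 n7 n8 n9 n10 n11 n12 n14 : ℕ)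
    (hT : T ≤ 196)
    (hs : n1 + n6 + n7 + n8 + n9 + n10 + n11 + n12 + n14 = 9)
    (heq : n1 + 36*n6 + 49*n7 + 64*n8 + 81*n9 + 100*n10 + 121*n11 + 144*n12 + 196*n14 = T) :
    n6 < 6 ∧ n7 < 4 ∧ n8 < 4 ∧ n9 < 3 ∧ n10 < 2 ∧ n11 < 2 ∧ n12 < 2 ∧ n14 < 2 := by
  refine ⟨by omega, by omega, by omega, by omega, by omega, by omega, by omega, by omega⟩

private lemma keyA (T n1 n6 n7 n8 n9 n10 n11 n12 n14 : ℕ)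
    (hT : T = 1 ∨ T = 36 ∨ T = 49 ∨ T = 64 ∨ T = 81 ∨ T = 100 ∨ T = 121 ∨
      T = 144 ∨ T = 196)
    (hs : n1 + n6 + n7 + n8 + n9 + n10 + n11 + n12 + n14 = 9)
    (heq : n1 + 36*n6 + 49*n7 + 64*n8 + 81*n9 + 100*n10 + 121*n11 + 144*n12 + 196*n14 = T) :
    False := by
  have hT' : T ≤ 196 := by clear hs heq; omega
  obtain ⟨b6, b7, b8, b9, b10, b11, b12, b14⟩ :=
    boundsA T n1 n6 n7 n8 n9 n10 n11 n12 n14 hT' hs heq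
  have hg : n6 + n7 + n8 + n9 + n10 + n11 + n12 + n14 ≤ 9 := by
    clear hT hT' heq; omega
  have hm : 9 - (n6 + n7 + n8 + n9 + n10 + n11 + n12 + n14) = n1 := by
    clear hT hT' heq; omega
  have H : ((9 - (n6 + n7 + n8 + n9 + n10 + n11 + n12 + n14)) +
      36*n6 + 49*n7 + 64*n8 + 81*n9 + 100*n10 + 121*n11 + 144*n12 + 196*n14 ≠ 36 ∧
     (9 - (n6 + n7 + n8 + n9 + n10 + n11 + n12 + n14)) +
      36*n6 + 49*n7 + 64*n8 + 81*n9 + 100*n10 + 121*n11 + 144*n12 + 196*n14 ≠ 49 ∧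
     (9 - (n6 + n7 + n8 + n9 + n10 + n11 + n12 + n14)) +
      36*n6 + 49*n7 + 64*n8 + 81*n9 + 100*n10 + 121*n11 + 144*n12 + 196*n14 ≠ 64 ∧
     (9 - (n6 + n7 + n8 + n9 + n10 + n11 + n12 + n14)) +
      36*n6 + 49*n7 + 64*n8 + 81*n9 + 100*n10 + 121*n11 + 144*n12 + 196*n14 ≠ 81 ∧
     (9 - (n6 + n7 + n8 + n9 + n10 + n11 + n12 + n14)) +
      36*n6 + 49*n7 + 64*n8 + 81*n9 + 100*n10 + 121*n11 + 144*n12 + 196*n14 ≠ 100 ∧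
     (9 - (n6 + n7 + n8 + n9 + n10 + n11 + n12 + n14)) +
      36*n6 + 49*n7 + 64*n8 + 81*n9 + 100*n10 + 121*n11 + 144*n12 + 196*n14 ≠ 121 ∧
     (9 - (n6 + n7 + n8 + n9 + n10 + n11 + n12 + n14)) +
      36*n6 + 49*n7 + 64*n8 + 81*n9 + 100*n10 + 121*n11 + 144*n12 + 196*n14 ≠ 144 ∧
     (9 - (n6 + n7 + n8 + n9 + n10 + n11 + n12 + n14)) +
      36*n6 + 49*n7 + 64*n8 + 81*n9 + 100*n10 + 121*n11 + 144*n12 + 196*n14 ≠ 196) :=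
    decA ⟨n6, b6⟩ ⟨n7, b7⟩ ⟨n8, b8⟩ ⟨n9, b9⟩ ⟨n10, b10⟩ ⟨n11, b11⟩
      ⟨n12, b12⟩ ⟨n14, b14⟩ hg
  rw [hm] at H
  obtain ⟨H36, H49, H64, H81, H100, H121, H144, H196⟩ := H
  rcases hT with rfl | rfl | rfl | rfl | rfl | rfl | rfl | rfl | rfl
  · omega
  · exact H36 heq
  · exact H49 heq
  · exact H64 heq
  · exact H81 heq
  · exact H100 heq
  · exact H121 heq
  · exact H144 heq
  · exact H196 heq

/-- The 2-color Rado number of `x₁² + ⋯ + x_9² = z²` equals 15: every 2-coloring of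
`{1, …, 15}` admits a monochromatic solution, and there exists a 2-coloring of
`{1, …, 14}` with no monochromatic solution. -/
theorem rado_number_two_colors_sum_9_squares_eq_square :
    (∀ χ : ℕ → Fin 2, ∃ (x : Fin 9 → ℕ) (z : ℕ),
      (∀ i, 1 ≤ x i ∧ x i ≤ 15) ∧ 1 ≤ z ∧ z ≤ 15 ∧
      (∀ i, χ (x i) = χ z) ∧ (∑ i, (x i) ^ 2) = z ^ 2) ∧
    (∃ χ : ℕ → Fin 2, ¬ ∃ (x : Fin 9 → ℕ) (z : ℕ),
      (∀ i, 1 ≤ x i ∧ x i ≤ 14) ∧ 1 ≤ z ∧ z ≤ 14 ∧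
      (∀ i, χ (x i) = χ z) ∧ (∑ i, (x i) ^ 2) = z ^ 2) := by
  constructor
  · intro χ
    rcases key2 (χ 1) (χ 2) (χ 3) (χ 5) (χ 6) (χ 7) (χ 8) (χ 9) (χ 13) (χ 15) with
      h | h | h | ⟨h1, h2⟩ | ⟨h1, h2⟩ | ⟨h1, h2, h3⟩ | ⟨h1, h2⟩ | ⟨h1, h2, h3, h4⟩ |
      ⟨h1, h2, h3, h4⟩ | h
    · exact ⟨![1,1,1,1,1,1,1,1,1], 3, by intro i; fin_cases i <;> norm_num,
        by norm_num, by norm_num, by intro i; fin_cases i <;> simpa using h,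
        by norm_num [Fin.sum_univ_succ]⟩
    · exact ⟨![2,2,2,2,2,2,2,2,2], 6, by intro i; fin_cases i <;> norm_num,
        by norm_num, by norm_num, by intro i; fin_cases i <;> simpa using h,
        by norm_num [Fin.sum_univ_succ]⟩
    · exact ⟨![3,3,3,3,3,3,3,3,3], 9, by intro i; fin_cases i <;> norm_num,
        by norm_num, by norm_num, by intro i; fin_cases i <;> simpa using h,
        by norm_num [Fin.sum_univ_succ]⟩
    · exact ⟨![1,1,1,1,1,1,1,9,9], 13, by intro i; fin_cases i <;> norm_num,
        by norm_num, by norm_num,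
        by intro i; fin_cases i <;> first | simpa using h1 | simpa using h2,
        by norm_num [Fin.sum_univ_succ]⟩
    · exact ⟨![1,1,1,1,1,1,5,5,5], 9, by intro i; fin_cases i <;> norm_num,
        by norm_num, by norm_num,
        by intro i; fin_cases i <;> first | simpa using h1 | simpa using h2,
        by norm_num [Fin.sum_univ_succ]⟩
    · exact ⟨![3,3,3,3,3,5,5,5,7], 13, by intro i; fin_cases i <;> norm_num,
        by norm_num, by norm_num,
        by intro i; fin_cases i <;>
          first | simpa using h1 | simpa using h2 | simpa using h3,
        by norm_num [Fin.sum_univ_succ]⟩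
    · exact ⟨![2,2,2,2,2,2,2,2,7], 9, by intro i; fin_cases i <;> norm_num,
        by norm_num, by norm_num,
        by intro i; fin_cases i <;> first | simpa using h1 | simpa using h2,
        by norm_num [Fin.sum_univ_succ]⟩
    · exact ⟨![2,2,2,3,3,5,5,5,8], 13, by intro i; fin_cases i <;> norm_num,
        by norm_num, by norm_num,
        by intro i; fin_cases i <;>
          first | simpa using h1 | simpa using h2 | simpa using h3 | simpa using h4,
        by norm_num [Fin.sum_univ_succ]⟩
    · exact ⟨![1,1,1,1,6,6,6,7,8], 15, by intro i; fin_cases i <;> norm_num,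
        by norm_num, by norm_num,
        by intro i; fin_cases i <;>
          first | simpa using h1 | simpa using h2 | simpa using h3 | simpa using h4,
        by norm_num [Fin.sum_univ_succ]⟩
    · exact ⟨![5,5,5,5,5,5,5,5,5], 15, by intro i; fin_cases i <;> norm_num,
        by norm_num, by norm_num, by intro i; fin_cases i <;> simpa using h,
        by norm_num [Fin.sum_univ_succ]⟩
  · refine ⟨fun n => if n = 2 ∨ n = 3 ∨ n = 4 ∨ n = 5 ∨ n = 13 then 1 else 0, ?_⟩
    rintro ⟨x, z, hx, hz1, hz2, hcol, hsum⟩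
    have hsum' : ∑ i, x i * x i = z * z := by
      simpa [pow_two] using hsum
    by_cases hPz : z = 2 ∨ z = 3 ∨ z = 4 ∨ z = 5 ∨ z = 13
    · have hmem : ∀ i, x i ∈ ({2,3,4,5,13} : Finset ℕ) := by
        intro i
        have hc := hcol i
        simp only [hPz, if_true] at hc
        by_cases hP : x i = 2 ∨ x i = 3 ∨ x i = 4 ∨ x i = 5 ∨ x i = 13
        · simp [Finset.mem_insert, hP]
        · simp only [hP, if_false] at hc; exact absurd hc (by decide)
      have h1 := fiber_sum x _ hmem (fun _ => 1)
      have h2 := fiber_sum x _ hmem (fun v => v * v)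
      rw [hsum'] at h2
      norm_num [Finset.sum_insert, Finset.mem_insert, Finset.mem_singleton,
        Finset.sum_singleton, Finset.sum_const, Finset.card_univ] at h1 h2
      have hzz : z * z = 4 ∨ z * z = 9 ∨ z * z = 16 ∨ z * z = 25 ∨ z * z = 169 := by
        rcases hPz with rfl | rfl | rfl | rfl | rfl <;> norm_num
      exact keyB (z * z)
        (Finset.filter (fun i => x i = 2) Finset.univ).card
        (Finset.filter (fun i => x i = 3) Finset.univ).card
        (Finset.filter (fun i => x i = 4) Finset.univ).card
        (Finset.filter (fun i => x i = 5) Finset.univ).card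
        (Finset.filter (fun i => x i = 13) Finset.univ).card
        hzz (by omega) (by omega)
    · have hmem : ∀ i, x i ∈ ({1,6,7,8,9,10,11,12,14} : Finset ℕ) := by
        intro i
        have hc := hcol i
        simp only [hPz, if_false] at hc
        have hb := hx i
        by_cases hP : x i = 2 ∨ x i = 3 ∨ x i = 4 ∨ x i = 5 ∨ x i = 13
        · simp only [hP, if_true] at hc; exact absurd hc (by decide)
        · simp only [Finset.mem_insert, Finset.mem_singleton]; omega
      have h1 := fiber_sum x _ hmem (fun _ => 1)
      have h2 := fiber_sum x _ hmem (fun v => v * v)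
      rw [hsum'] at h2
      norm_num [Finset.sum_insert, Finset.mem_insert, Finset.mem_singleton,
        Finset.sum_singleton, Finset.sum_const, Finset.card_univ] at h1 h2
      have hzz : z * z = 1 ∨ z * z = 36 ∨ z * z = 49 ∨ z * z = 64 ∨ z * z = 81 ∨
          z * z = 100 ∨ z * z = 121 ∨ z * z = 144 ∨ z * z = 196 := by
        have : z = 1 ∨ z = 6 ∨ z = 7 ∨ z = 8 ∨ z = 9 ∨ z = 10 ∨ z = 11 ∨ z = 12 ∨
            z = 14 := by omega
        rcases this with rfl | rfl | rfl | rfl | rfl | rfl | rfl | rfl | rfl <;> norm_num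
      exact keyA (z * z)
        (Finset.filter (fun i => x i = 1) Finset.univ).card
        (Finset.filter (fun i => x i = 6) Finset.univ).card
        (Finset.filter (fun i => x i = 7) Finset.univ).card
        (Finset.filter (fun i => x i = 8) Finset.univ).card
        (Finset.filter (fun i => x i = 9) Finset.univ).card
        (Finset.filter (fun i => x i = 10) Finset.univ).card
        (Finset.filter (fun i => x i = 11) Finset.univ).card
        (Finset.filter (fun i => x i = 12) Finset.univ).card
        (Finset.filter (fun i => x i = 14) Finset.univ).card
        hzz (by omega) (by omega)
end

section
/- The 2-color Rado number of the equation x₁² + x₂² + ... + x₁₁² = z² (eleven squares summing to a square) equals 20: every 2-coloring of {1, ..., 20} admits a monochromatic solution, and there exists a 2-coloring of {1, ..., 19} with no monochromatic solution. -/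
/-!
Upper bound: relative to the colour of `1`, split on the colours of a few small numbers. In every
branch, identities such as `8 * 1² + 2 * 2² + 3² = 5²` force the colours of further numbers one at
a time, until some identity has all its terms of one colour.

Lower bound: colour `1, 2, 4, 5, 7, 8, 9` with one colour and the rest of `{1, …, 19}` with the
other; computing the sums of eleven squares from each class shows that none of them is the square
of an element of that class.
-/

variable {C : Type*}

def HasMonoSolution (k N : ℕ) (χ : ℕ → C) : Prop :=
  ∃ (x : Fin k → ℕ) (z : ℕ), (∀ i, 1 ≤ x i ∧ x i ≤ N) ∧ 1 ≤ z ∧ z ≤ N ∧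
    (∀ i, χ (x i) = χ z) ∧ ∑ i, x i ^ 2 = z ^ 2

/-- With the default arguments a concrete solution is given by its terms alone: the identity is
checked by evaluation and, for `Fin 2`-colourings, the colour condition follows by `omega` from
the colour facts in context. -/
theorem HasMonoSolution.intro {k N : ℕ} {χ : ℕ → C} (x : Fin k → ℕ) (z : ℕ)
    (hχ : ∀ i, χ (x i) = χ z := by simp [Fin.forall_fin_succ]; omega)
    (hsol : (∀ i, 1 ≤ x i ∧ x i ≤ N) ∧ 1 ≤ z ∧ z ≤ N ∧ ∑ i, x i ^ 2 = z ^ 2 := by decide) :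
    HasMonoSolution k N χ :=
  ⟨x, z, hsol.1, hsol.2.1, hsol.2.2.1, hχ, hsol.2.2.2⟩

section UpperBound

variable {χ : ℕ → Fin 2}

theorem hasMonoSolution_of_color_two_eq (h2 : χ 2 = χ 1) : HasMonoSolution 11 20 χ := by
  by_contra hχ
  rcases eq_or_ne (χ 3) (χ 1) with h3 | h3
  · have h5 : χ 5 ≠ χ 1 := fun h5 => hχ (.intro ![1, 1, 1, 1, 1, 1, 1, 1, 2, 2, 3] 5)
    have h8 : χ 8 ≠ χ 1 := fun h8 => hχ (.intro ![2, 2, 2, 2, 2, 2, 2, 3, 3, 3, 3] 8)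
    have h7 : χ 7 ≠ χ 1 := fun h7 => hχ (.intro ![2, 2, 2, 2, 2, 2, 2, 2, 2, 2, 3] 7)
    have h9 : χ 9 ≠ χ 1 := fun h9 => hχ (.intro ![1, 2, 2, 3, 3, 3, 3, 3, 3, 3, 3] 9)
    have h6 : χ 6 ≠ χ 1 := fun h6 => hχ (.intro ![1, 1, 1, 1, 1, 1, 2, 2, 2, 3, 3] 6)
    have h20 : χ 20 = χ 1 :=
      of_not_not fun h20 => hχ (.intro ![5, 5, 6, 6, 6, 6, 6, 6, 6, 7, 7] 20)
    have h19 : χ 19 ≠ χ 1 := fun h19 => hχ (.intro ![1, 1, 2, 2, 2, 2, 2, 2, 2, 3, 19] 20)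
    have h10 : χ 10 = χ 1 :=
      of_not_not fun h10 => hχ (.intro ![5, 5, 5, 5, 5, 5, 5, 5, 5, 6, 10] 19)
    have h4 : χ 4 = χ 1 := of_not_not fun h4 => hχ (.intro ![4, 5, 5, 5, 5, 5, 5, 5, 5, 8, 9] 19)
    exact hχ (.intro ![2, 2, 2, 2, 3, 3, 3, 3, 4, 4, 4] 10)
  · rcases eq_or_ne (χ 6) (χ 1) with h6 | h6
    · have h16 : χ 16 ≠ χ 1 := fun h16 => hχ (.intro ![1, 1, 1, 1, 6, 6, 6, 6, 6, 6, 6] 16)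
      have h8 : χ 8 ≠ χ 1 := fun h8 => hχ (.intro ![1, 1, 1, 1, 2, 2, 2, 2, 2, 2, 6] 8)
      have h7 : χ 7 ≠ χ 1 := fun h7 => hχ (.intro ![1, 1, 1, 1, 1, 1, 1, 1, 1, 2, 6] 7)
      have h19 : χ 19 ≠ χ 1 := fun h19 => hχ (.intro ![1, 6, 6, 6, 6, 6, 6, 6, 6, 6, 6] 19)
      have h4 : χ 4 = χ 1 :=
        of_not_not fun h4 => hχ (.intro ![3, 3, 3, 3, 3, 3, 3, 4, 7, 8, 8] 16)
      have h11 : χ 11 ≠ χ 1 := fun h11 => hχ (.intro ![1, 1, 1, 1, 1, 4, 4, 4, 4, 4, 6] 11)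
      exact hχ (.intro ![3, 3, 3, 3, 3, 3, 3, 7, 8, 8, 11] 19)
    · rcases eq_or_ne (χ 9) (χ 1) with h9 | h9
      · have h11 : χ 11 ≠ χ 1 := fun h11 => hχ (.intro ![2, 2, 2, 2, 2, 2, 2, 2, 2, 2, 9] 11)
        have h20 : χ 20 = χ 1 :=
          of_not_not fun h20 => hχ (.intro ![3, 3, 3, 6, 6, 6, 6, 6, 6, 6, 11] 20)
        have h17 : χ 17 ≠ χ 1 := fun h17 => hχ (.intro ![1, 1, 2, 2, 2, 2, 2, 2, 2, 9, 17] 20)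
        have h4 : χ 4 ≠ χ 1 := fun h4 => hχ (.intro ![2, 2, 2, 4, 4, 4, 4, 9, 9, 9, 9] 20)
        exact hχ (.intro ![3, 4, 4, 4, 4, 6, 6, 6, 6, 6, 6] 17)
      · have h15 : χ 15 = χ 1 :=
          of_not_not fun h15 => hχ (.intro ![3, 3, 3, 3, 3, 3, 3, 3, 6, 6, 9] 15)
        have h16 : χ 16 ≠ χ 1 := fun h16 => hχ (.intro ![1, 1, 1, 2, 2, 2, 2, 2, 2, 2, 15] 16)
        have h20 : χ 20 = χ 1 :=
          of_not_not fun h20 => hχ (.intro ![3, 3, 3, 3, 3, 3, 3, 3, 6, 6, 16] 20)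
        have h18 : χ 18 = χ 1 :=
          of_not_not fun h18 => hχ (.intro ![3, 3, 3, 3, 3, 3, 6, 6, 6, 9, 9] 18)
        have h4 : χ 4 = χ 1 :=
          of_not_not fun h4 => hχ (.intro ![4, 4, 4, 4, 4, 4, 4, 6, 6, 6, 6] 16)
        exact hχ (.intro ![2, 2, 2, 2, 2, 2, 2, 4, 4, 4, 18] 20)

theorem hasMonoSolution_of_color_two_ne (h2 : χ 2 ≠ χ 1) : HasMonoSolution 11 20 χ := by
  by_contra hχ
  rcases eq_or_ne (χ 9) (χ 1) with h9 | h9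
  · have h6 : χ 6 ≠ χ 1 := fun h6 => hχ (.intro ![1, 1, 1, 1, 1, 1, 1, 1, 1, 6, 6] 9)
    rcases eq_or_ne (χ 4) (χ 1) with h4 | h4
    · have h14 : χ 14 ≠ χ 1 := fun h14 => hχ (.intro ![1, 1, 1, 4, 4, 4, 4, 4, 4, 4, 9] 14)
      have h11 : χ 11 ≠ χ 1 := fun h11 => hχ (.intro ![1, 1, 1, 1, 1, 1, 1, 1, 4, 4, 9] 11)
      have h3 : χ 3 ≠ χ 1 := fun h3 => hχ (.intro ![1, 1, 1, 1, 3, 3, 3, 3, 3, 4, 4] 9)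
      exact hχ (.intro ![2, 2, 2, 3, 3, 3, 3, 3, 3, 3, 11] 14)
    · have h18 : χ 18 = χ 1 :=
        of_not_not fun h18 => hχ (.intro ![2, 4, 4, 6, 6, 6, 6, 6, 6, 6, 6] 18)
      have h10 : χ 10 = χ 1 :=
        of_not_not fun h10 => hχ (.intro ![2, 2, 2, 2, 2, 2, 2, 2, 4, 4, 6] 10)
      have h3 : χ 3 ≠ χ 1 := fun h3 => hχ (.intro ![1, 1, 1, 1, 1, 1, 3, 3, 10, 10, 10] 18)
      have h17 : χ 17 ≠ χ 1 := fun h17 => hχ (.intro ![1, 1, 1, 1, 1, 1, 1, 1, 9, 10, 10] 17)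
      exact hχ (.intro ![3, 4, 4, 4, 4, 6, 6, 6, 6, 6, 6] 17)
  · have h11 : χ 11 = χ 1 :=
      of_not_not fun h11 => hχ (.intro ![2, 2, 2, 2, 2, 2, 2, 2, 2, 2, 9] 11)
    rcases eq_or_ne (χ 3) (χ 1) with h3 | h3
    · have h6 : χ 6 ≠ χ 1 := fun h6 => hχ (.intro ![1, 1, 1, 1, 3, 3, 3, 3, 3, 6, 6] 11)
      rcases eq_or_ne (χ 15) (χ 1) with h15 | h15
      · have h10 : χ 10 ≠ χ 1 := fun h10 => hχ (.intro ![1, 1, 1, 1, 1, 1, 1, 3, 3, 10, 10] 15)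
        have h4 : χ 4 ≠ χ 1 := fun h4 => hχ (.intro ![3, 3, 3, 3, 3, 3, 3, 3, 4, 4, 11] 15)
        exact hχ (.intro ![2, 2, 2, 2, 2, 2, 2, 2, 4, 4, 6] 10)
      · have h4 : χ 4 = χ 1 :=
          of_not_not fun h4 => hχ (.intro ![2, 2, 2, 4, 4, 4, 4, 4, 4, 6, 9] 15)
        have h5 : χ 5 = χ 1 :=
          of_not_not fun h5 => hχ (.intro ![2, 2, 2, 2, 2, 5, 6, 6, 6, 6, 6] 15)
        exact hχ (.intro ![1, 1, 1, 1, 1, 3, 4, 4, 5, 5, 5] 11)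
    · have h4 : χ 4 = χ 1 := of_not_not fun h4 => hχ (.intro ![2, 2, 2, 2, 2, 3, 3, 3, 3, 3, 4] 9)
      have h6 : χ 6 = χ 1 := of_not_not fun h6 => hχ (.intro ![2, 2, 2, 2, 2, 2, 2, 2, 2, 3, 6] 9)
      exact hχ (.intro ![1, 1, 1, 1, 1, 4, 4, 4, 4, 4, 6] 11)

theorem hasMonoSolution_eleven_twenty (χ : ℕ → Fin 2) : HasMonoSolution 11 20 χ :=
  (eq_or_ne (χ 2) (χ 1)).elim hasMonoSolution_of_color_two_eq hasMonoSolution_of_color_two_ne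

end UpperBound

section LowerBound

/-- Bit `n` of `sqSumMask S k` is set iff `n` is a sum of `k` squares of elements of `S`. -/
def sqSumMask (S : List ℕ) : ℕ → ℕ
  | 0 => 1
  | k + 1 => S.foldr (fun s acc => acc ||| sqSumMask S k <<< s ^ 2) 0

theorem testBit_foldr_or_shiftLeft {m n s : ℕ} {S : List ℕ} (hs : s ∈ S) (hm : m.testBit n) :
    (S.foldr (fun t acc => acc ||| m <<< t ^ 2) 0).testBit (n + s ^ 2) := by
  induction S with
  | nil => simp at hs
  | cons t S ih =>
    rw [List.foldr_cons, Nat.testBit_or, Bool.or_eq_true]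
    rcases List.mem_cons.1 hs with rfl | hs
    · right
      simpa [Nat.testBit_shiftLeft] using hm
    · exact .inl (ih hs)

theorem testBit_sqSumMask_sum {S : List ℕ} : ∀ {k : ℕ} (x : Fin k → ℕ), (∀ i, x i ∈ S) →
    (sqSumMask S k).testBit (∑ i, x i ^ 2)
  | 0, _, _ => by simp [sqSumMask]
  | k + 1, x, hx => by
    rw [Fin.sum_univ_castSucc, sqSumMask]
    exact testBit_foldr_or_shiftLeft (hx _) (testBit_sqSumMask_sum _ fun i => hx i.castSucc)

def colorClass [DecidableEq C] (χ : ℕ → C) (N : ℕ) (c : C) : List ℕ :=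
  (List.range' 1 N).filter (χ · = c)

theorem not_hasMonoSolution_of_testBit [DecidableEq C] {k N : ℕ} {χ : ℕ → C}
    (h : ∀ z ∈ List.range' 1 N, (sqSumMask (colorClass χ N (χ z)) k).testBit (z ^ 2) = false) :
    ¬ HasMonoSolution k N χ := by
  rintro ⟨x, z, hx, hz1, hzN, hχ, hsum⟩
  have hx_mem : ∀ i, x i ∈ colorClass χ N (χ z) := fun i => by
    have := hx i
    simp only [colorClass, List.mem_filter, List.mem_range'_1, hχ i, decide_true, and_true]
    omega
  have := testBit_sqSumMask_sum x hx_mem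
  rw [hsum, h z (List.mem_range'_1.2 ⟨hz1, by omega⟩)] at this
  exact Bool.false_ne_true this

def extremalColoring (n : ℕ) : Fin 2 := if n ∈ [1, 2, 4, 5, 7, 8, 9] then 0 else 1

theorem not_hasMonoSolution_extremalColoring : ¬ HasMonoSolution 11 19 extremalColoring :=
  not_hasMonoSolution_of_testBit (by decide +kernel)

end LowerBound

/-- The 2-color Rado number of `x₁² + ⋯ + x_11² = z²` equals 20: every 2-coloring of
`{1, …, 20}` admits a monochromatic solution, and there exists a 2-coloring of
`{1, …, 19}` with no monochromatic solution. -/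
theorem rado_number_two_colors_sum_11_squares_eq_square :
    (∀ χ : ℕ → Fin 2, ∃ (x : Fin 11 → ℕ) (z : ℕ),
      (∀ i, 1 ≤ x i ∧ x i ≤ 20) ∧ 1 ≤ z ∧ z ≤ 20 ∧
      (∀ i, χ (x i) = χ z) ∧ (∑ i, (x i) ^ 2) = z ^ 2) ∧
    (∃ χ : ℕ → Fin 2, ¬ ∃ (x : Fin 11 → ℕ) (z : ℕ),
      (∀ i, 1 ≤ x i ∧ x i ≤ 19) ∧ 1 ≤ z ∧ z ≤ 19 ∧
      (∀ i, χ (x i) = χ z) ∧ (∑ i, (x i) ^ 2) = z ^ 2) :=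
  ⟨hasMonoSolution_eleven_twenty, extremalColoring, not_hasMonoSolution_extremalColoring⟩
end

section
/- The 2-color Rado number of the equation x₁² + x₂² + ... + x₁₃² = z² (thirteen squares summing to a square) equals 17: every 2-coloring of {1, ..., 17} admits a monochromatic solution, and there exists a 2-coloring of {1, ..., 16} with no monochromatic solution. -/
private lemma two : ∀ a : Fin 2, a = 0 ∨ a = 1 := by decide

private lemma swap_inj : ∀ a b : Fin 2, 1 - a = 1 - b → a = b := by decide

private theorem ub0 (χ : ℕ → Fin 2) (h1 : χ 1 = 0) :
    ∃ (x : Fin 13 → ℕ) (z : ℕ),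
      (∀ i, 1 ≤ x i ∧ x i ≤ 17) ∧ 1 ≤ z ∧ z ≤ 17 ∧
      (∀ i, χ (x i) = χ z) ∧ (∑ i, (x i) ^ 2) = z ^ 2 := by
  rcases two (χ 2) with h2 | h2
  · -- χ 2 = 0
    rcases two (χ 4) with h4 | h4
    · -- χ 4 = 0
      exact ⟨![1,1,1,1,1,1,1,1,1,1,1,1,2], 4, by decide, by decide, by decide,
        by intro i; fin_cases i <;> first | exact h1.trans h4.symm | exact h2.trans h4.symm, by decide⟩
    · -- χ 4 = 1
      rcases two (χ 5) with h5 | h5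
      · -- χ 5 = 0
        exact ⟨![1,1,1,1,1,1,1,1,1,2,2,2,2], 5, by decide, by decide, by decide,
          by intro i; fin_cases i <;> first | exact h1.trans h5.symm | exact h2.trans h5.symm, by decide⟩
      · -- χ 5 = 1
        rcases two (χ 7) with h7 | h7
        · -- χ 7 = 0
          exact ⟨![1,2,2,2,2,2,2,2,2,2,2,2,2], 7, by decide, by decide, by decide,
            by intro i; fin_cases i <;> first | exact h1.trans h7.symm | exact h2.trans h7.symm, by decide⟩
        · -- χ 7 = 1
          rcases two (χ 17) with h17 | h17
          · -- χ 17 = 0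
            rcases two (χ 8) with h8 | h8
            · -- χ 8 = 0
              exact ⟨![1,2,2,2,2,2,2,2,2,8,8,8,8], 17, by decide, by decide, by decide,
                by intro i; fin_cases i <;> first | exact h1.trans h17.symm | exact h2.trans h17.symm | exact h8.trans h17.symm, by decide⟩
            · -- χ 8 = 1
              rcases two (χ 16) with h16 | h16
              · -- χ 16 = 0
                exact ⟨![1,1,1,1,1,2,2,2,2,2,2,2,16], 17, by decide, by decide, by decide,
                  by intro i; fin_cases i <;> first | exact h1.trans h17.symm | exact h2.trans h17.symm | exact h16.trans h17.symm, by decide⟩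
              · -- χ 16 = 1
                exact ⟨![4,4,4,4,4,4,4,4,4,4,4,4,8], 16, by decide, by decide, by decide,
                  by intro i; fin_cases i <;> first | exact h4.trans h16.symm | exact h8.trans h16.symm, by decide⟩
          · -- χ 17 = 1
            exact ⟨![4,4,4,4,5,5,5,5,5,5,5,5,5], 17, by decide, by decide, by decide,
              by intro i; fin_cases i <;> first | exact h4.trans h17.symm | exact h5.trans h17.symm, by decide⟩
  · -- χ 2 = 1
    rcases two (χ 4) with h4 | h4
    · -- χ 4 = 0
      rcases two (χ 11) with h11 | h11
      · -- χ 11 = 0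
        rcases two (χ 3) with h3 | h3
        · -- χ 3 = 0
          exact ⟨![1,1,1,3,3,3,3,3,3,4,4,4,4], 11, by decide, by decide, by decide,
            by intro i; fin_cases i <;> first | exact h1.trans h11.symm | exact h3.trans h11.symm | exact h4.trans h11.symm, by decide⟩
        · -- χ 3 = 1
          rcases two (χ 5) with h5 | h5
          · -- χ 5 = 0
            exact ⟨![1,1,1,1,1,1,1,4,4,4,4,5,5], 11, by decide, by decide, by decide,
              by intro i; fin_cases i <;> first | exact h1.trans h11.symm | exact h4.trans h11.symm | exact h5.trans h11.symm, by decide⟩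
          · -- χ 5 = 1
            rcases two (χ 7) with h7 | h7
            · -- χ 7 = 0
              exact ⟨![1,1,1,1,1,1,1,1,4,4,4,4,7], 11, by decide, by decide, by decide,
                by intro i; fin_cases i <;> first | exact h1.trans h11.symm | exact h4.trans h11.symm | exact h7.trans h11.symm, by decide⟩
            · -- χ 7 = 1
              rcases two (χ 8) with h8 | h8
              · -- χ 8 = 0
                exact ⟨![1,1,1,1,1,1,1,1,1,4,4,4,8], 11, by decide, by decide, by decide,
                  by intro i; fin_cases i <;> first | exact h1.trans h11.symm | exact h4.trans h11.symm | exact h8.trans h11.symm, by decide⟩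
              · -- χ 8 = 1
                rcases two (χ 12) with h12 | h12
                · -- χ 12 = 0
                  rcases two (χ 15) with h15 | h15
                  · -- χ 15 = 0
                    rcases two (χ 16) with h16 | h16
                    · -- χ 16 = 0
                      rcases two (χ 10) with h10 | h10
                      · -- χ 10 = 0
                        exact ⟨![1,1,1,1,1,1,1,1,4,4,4,10,10], 16, by decide, by decide, by decide,
                          by intro i; fin_cases i <;> first | exact h1.trans h16.symm | exact h4.trans h16.symm | exact h10.trans h16.symm, by decide⟩
                      · -- χ 10 = 1
                        rcases two (χ 13) with h13 | h13
                        · -- χ 13 = 0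
                          exact ⟨![1,1,1,1,1,1,1,4,4,4,4,4,13], 16, by decide, by decide, by decide,
                            by intro i; fin_cases i <;> first | exact h1.trans h16.symm | exact h4.trans h16.symm | exact h13.trans h16.symm, by decide⟩
                        · -- χ 13 = 1
                          exact ⟨![2,2,2,2,2,2,2,2,2,2,2,5,10], 13, by decide, by decide, by decide,
                            by intro i; fin_cases i <;> first | exact h2.trans h13.symm | exact h5.trans h13.symm | exact h10.trans h13.symm, by decide⟩
                    · -- χ 16 = 1
                      exact ⟨![2,3,3,3,5,5,5,5,5,5,5,5,5], 16, by decide, by decide, by decide,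
                        by intro i; fin_cases i <;> first | exact h2.trans h16.symm | exact h3.trans h16.symm | exact h5.trans h16.symm, by decide⟩
                  · -- χ 15 = 1
                    exact ⟨![2,2,2,2,3,5,5,5,5,5,5,5,5], 15, by decide, by decide, by decide,
                      by intro i; fin_cases i <;> first | exact h2.trans h15.symm | exact h3.trans h15.symm | exact h5.trans h15.symm, by decide⟩
                · -- χ 12 = 1
                  exact ⟨![2,3,3,3,3,3,3,3,3,3,3,5,5], 12, by decide, by decide, by decide,
                    by intro i; fin_cases i <;> first | exact h2.trans h12.symm | exact h3.trans h12.symm | exact h5.trans h12.symm, by decide⟩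
      · -- χ 11 = 1
        rcases two (χ 13) with h13 | h13
        · -- χ 13 = 0
          rcases two (χ 5) with h5 | h5
          · -- χ 5 = 0
            exact ⟨![1,1,1,1,1,4,4,4,4,5,5,5,5], 13, by decide, by decide, by decide,
              by intro i; fin_cases i <;> first | exact h1.trans h13.symm | exact h4.trans h13.symm | exact h5.trans h13.symm, by decide⟩
          · -- χ 5 = 1
            rcases two (χ 7) with h7 | h7
            · -- χ 7 = 0
              exact ⟨![1,1,1,1,1,1,1,4,4,4,4,7,7], 13, by decide, by decide, by decide,
                by intro i; fin_cases i <;> first | exact h1.trans h13.symm | exact h4.trans h13.symm | exact h7.trans h13.symm, by decide⟩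
            · -- χ 7 = 1
              rcases two (χ 8) with h8 | h8
              · -- χ 8 = 0
                exact ⟨![1,1,1,1,1,1,1,1,1,4,4,8,8], 13, by decide, by decide, by decide,
                  by intro i; fin_cases i <;> first | exact h1.trans h13.symm | exact h4.trans h13.symm | exact h8.trans h13.symm, by decide⟩
              · -- χ 8 = 1
                rcases two (χ 14) with h14 | h14
                · -- χ 14 = 0
                  exact ⟨![1,1,1,1,1,1,1,1,1,1,1,4,13], 14, by decide, by decide, by decide,
                    by intro i; fin_cases i <;> first | exact h1.trans h14.symm | exact h4.trans h14.symm | exact h13.trans h14.symm, by decide⟩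
                · -- χ 14 = 1
                  exact ⟨![2,2,2,2,2,2,2,2,5,5,5,5,8], 14, by decide, by decide, by decide,
                    by intro i; fin_cases i <;> first | exact h2.trans h14.symm | exact h5.trans h14.symm | exact h8.trans h14.symm, by decide⟩
        · -- χ 13 = 1
          exact ⟨![2,2,2,2,2,2,2,2,2,2,2,2,11], 13, by decide, by decide, by decide,
            by intro i; fin_cases i <;> first | exact h2.trans h13.symm | exact h11.trans h13.symm, by decide⟩
    · -- χ 4 = 1
      rcases two (χ 8) with h8 | h8
      · -- χ 8 = 0
        rcases two (χ 10) with h10 | h10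
        · -- χ 10 = 0
          rcases two (χ 14) with h14 | h14
          · -- χ 14 = 0
            rcases two (χ 3) with h3 | h3
            · -- χ 3 = 0
              exact ⟨![1,1,1,1,1,1,1,1,1,3,3,3,8], 10, by decide, by decide, by decide,
                by intro i; fin_cases i <;> first | exact h1.trans h10.symm | exact h3.trans h10.symm | exact h8.trans h10.symm, by decide⟩
            · -- χ 3 = 1
              rcases two (χ 5) with h5 | h5
              · -- χ 5 = 0
                exact ⟨![1,1,1,1,1,1,1,1,1,1,1,5,8], 10, by decide, by decide, by decide,
                  by intro i; fin_cases i <;> first | exact h1.trans h10.symm | exact h5.trans h10.symm | exact h8.trans h10.symm, by decide⟩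
              · -- χ 5 = 1
                rcases two (χ 17) with h17 | h17
                · -- χ 17 = 0
                  rcases two (χ 11) with h11 | h11
                  · -- χ 11 = 0
                    exact ⟨![1,1,1,1,1,1,1,1,1,1,1,8,11], 14, by decide, by decide, by decide,
                      by intro i; fin_cases i <;> first | exact h1.trans h14.symm | exact h8.trans h14.symm | exact h11.trans h14.symm, by decide⟩
                  · -- χ 11 = 1
                    exact ⟨![2,2,3,3,3,3,3,3,3,3,3,4,4], 11, by decide, by decide, by decide,
                      by intro i; fin_cases i <;> first | exact h2.trans h11.symm | exact h3.trans h11.symm | exact h4.trans h11.symm, by decide⟩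
                · -- χ 17 = 1
                  exact ⟨![4,4,4,4,5,5,5,5,5,5,5,5,5], 17, by decide, by decide, by decide,
                    by intro i; fin_cases i <;> first | exact h4.trans h17.symm | exact h5.trans h17.symm, by decide⟩
          · -- χ 14 = 1
            exact ⟨![2,4,4,4,4,4,4,4,4,4,4,4,4], 14, by decide, by decide, by decide,
              by intro i; fin_cases i <;> first | exact h2.trans h14.symm | exact h4.trans h14.symm, by decide⟩
        · -- χ 10 = 1
          exact ⟨![2,2,2,2,2,2,2,2,2,4,4,4,4], 10, by decide, by decide, by decide,
            by intro i; fin_cases i <;> first | exact h2.trans h10.symm | exact h4.trans h10.symm, by decide⟩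
      · -- χ 8 = 1
        exact ⟨![2,2,2,2,2,2,2,2,2,2,2,2,4], 8, by decide, by decide, by decide,
          by intro i; fin_cases i <;> first | exact h2.trans h8.symm | exact h4.trans h8.symm, by decide⟩

/-- The 2-color Rado number of `x₁² + ⋯ + x_13² = z²` equals 17: every 2-coloring of
`{1, …, 17}` admits a monochromatic solution, and there exists a 2-coloring of
`{1, …, 16}` with no monochromatic solution. -/
theorem rado_number_two_colors_sum_13_squares_eq_square :
    (∀ χ : ℕ → Fin 2, ∃ (x : Fin 13 → ℕ) (z : ℕ),
      (∀ i, 1 ≤ x i ∧ x i ≤ 17) ∧ 1 ≤ z ∧ z ≤ 17 ∧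
      (∀ i, χ (x i) = χ z) ∧ (∑ i, (x i) ^ 2) = z ^ 2) ∧
    (∃ χ : ℕ → Fin 2, ¬ ∃ (x : Fin 13 → ℕ) (z : ℕ),
      (∀ i, 1 ≤ x i ∧ x i ≤ 16) ∧ 1 ≤ z ∧ z ≤ 16 ∧
      (∀ i, χ (x i) = χ z) ∧ (∑ i, (x i) ^ 2) = z ^ 2) := by
  constructor
  · intro χ
    rcases two (χ 1) with h1 | h1
    · exact ub0 χ h1
    · obtain ⟨x, z, hx, hz1, hz2, hcol, hsum⟩ :=
        ub0 (fun n => 1 - χ n) (by simp [h1])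
      exact ⟨x, z, hx, hz1, hz2, fun i => swap_inj _ _ (hcol i), hsum⟩
  · refine ⟨fun n => if n = 1 ∨ n = 2 ∨ n = 3 ∨ n = 16 then 1 else 0, ?_⟩
    rintro ⟨x, z, hx, hz1, hz2, hc, hsum⟩
    by_cases hz : z = 1 ∨ z = 2 ∨ z = 3 ∨ z = 16
    · -- all values in {1,2,3,16}
      have hmem : ∀ i, x i = 1 ∨ x i = 2 ∨ x i = 3 ∨ x i = 16 := by
        intro i
        have := hc i
        simp only [hz, if_true] at this
        by_contra hcon
        simp only [hcon, if_false] at this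
        exact absurd this (by decide)
      -- sum ≥ 13 forces z = 16
      have hlow : 13 ≤ ∑ i, (x i) ^ 2 := by
        calc (13 : ℕ) = (Finset.univ : Finset (Fin 13)).card • 1 := by simp
        _ ≤ ∑ i, (x i) ^ 2 := Finset.card_nsmul_le_sum _ _ _
          (fun i _ => Nat.one_le_iff_ne_zero.mpr (pow_ne_zero 2 (by have := (hx i).1; omega)))
      have h13 : 13 ≤ z ^ 2 := hsum ▸ hlow
      have hz16 : z = 16 := by
        rcases hz with h|h|h|h <;> subst h <;> first | rfl | norm_num at h13
      subst hz16
      by_cases h16 : ∃ i, x i = 16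
      · obtain ⟨i, hi⟩ := h16
        have hsplit : (x i) ^ 2 + ∑ j ∈ Finset.univ.erase i, (x j) ^ 2 = ∑ j, (x j) ^ 2 :=
          Finset.add_sum_erase Finset.univ (fun j => (x j) ^ 2) (Finset.mem_univ i)
        have herase : 12 ≤ ∑ j ∈ Finset.univ.erase i, (x j) ^ 2 := by
          calc (12 : ℕ) = (Finset.univ.erase i).card • 1 := by
                simp [Finset.card_erase_of_mem]
          _ ≤ _ := Finset.card_nsmul_le_sum _ _ _
              (fun j _ => Nat.one_le_iff_ne_zero.mpr (pow_ne_zero 2 (by have := (hx j).1; omega)))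
        have hxi : x i ^ 2 = 256 := by rw [hi]; norm_num
        have hsum' : ∑ j, (x j) ^ 2 = 256 := by rw [hsum]; norm_num
        omega
      · push_neg at h16
        have hupp : ∑ i, (x i) ^ 2 ≤ 117 := by
          calc ∑ i, (x i) ^ 2 ≤ (Finset.univ : Finset (Fin 13)).card • 9 :=
            Finset.sum_le_card_nsmul _ _ _ (fun i _ => by
              rcases hmem i with h|h|h|h <;> first | exact absurd h (h16 i) | (rw [h]; norm_num))
          _ = 117 := by simp
        rw [hsum] at hupp
        norm_num at hupp
    · -- all values in [4,15]
      have hzr : 4 ≤ z ∧ z ≤ 15 := by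
        constructor
        · omega
        · omega
      have hmem : ∀ i, 4 ≤ x i ∧ x i ≤ 15 := by
        intro i
        have := hc i
        simp only [if_neg hz] at this
        by_cases hcon : x i = 1 ∨ x i = 2 ∨ x i = 3 ∨ x i = 16
        · rw [if_pos hcon] at this; exact absurd this (by decide)
        · have := (hx i); omega
      have hlow : 208 ≤ ∑ i, (x i) ^ 2 := by
        calc (208 : ℕ) = (Finset.univ : Finset (Fin 13)).card • 16 := by simp
        _ ≤ ∑ i, (x i) ^ 2 := Finset.card_nsmul_le_sum _ _ _
          (fun i _ => by have := (hmem i).1; nlinarith)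
      have hz15 : z = 15 := by rw [hsum] at hlow; nlinarith [hzr.1, hzr.2]
      subst hz15
      -- each x i ∈ {4,5}
      have h45 : ∀ i, x i = 4 ∨ x i = 5 := by
        intro i
        have hsplit : (x i) ^ 2 + ∑ j ∈ Finset.univ.erase i, (x j) ^ 2 = ∑ j, (x j) ^ 2 :=
          Finset.add_sum_erase Finset.univ (fun j => (x j) ^ 2) (Finset.mem_univ i)
        have herase : 192 ≤ ∑ j ∈ Finset.univ.erase i, (x j) ^ 2 := by
          calc (192 : ℕ) = (Finset.univ.erase i).card • 16 := by
                simp [Finset.card_erase_of_mem]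
          _ ≤ _ := Finset.card_nsmul_le_sum _ _ _
              (fun j _ => by have := (hmem j).1; nlinarith)
        have : (x i) ^ 2 ≤ 33 := by rw [← hsplit] at hsum; norm_num at hsum; omega
        have h4 := (hmem i).1
        have h5 : x i ≤ 5 := by nlinarith
        omega
      -- mod 9 contradiction
      have h9 : ((∑ i, (x i) ^ 2 : ℕ) : ZMod 9) = ((225 : ℕ) : ZMod 9) := by
        rw [hsum]; norm_num
      push_cast at h9
      have h7 : ∀ i : Fin 13, ((x i : ZMod 9)) ^ 2 = 7 := by
        intro i
        rcases h45 i with h|h <;> rw [h] <;> decide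
      rw [Finset.sum_congr rfl (fun i _ => h7 i)] at h9
      simp only [Finset.sum_const, Finset.card_univ, Fintype.card_fin, smul_eq_mul] at h9
      exact absurd h9 (by decide)
end

section
/- The 2-color Rado number of the equation x₁² + x₂² + ... + x₁₆² = z² (sixteen squares summing to a square) equals 17: every 2-coloring of {1, ..., 17} admits a monochromatic solution, and there exists a 2-coloring of {1, ..., 16} with no monochromatic solution. -/
/-- The 2-color Rado number of `x₁² + ⋯ + x_16² = z²` equals 17: every 2-coloring of
`{1, …, 17}` admits a monochromatic solution, and there exists a 2-coloring of
`{1, …, 16}` with no monochromatic solution. -/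
theorem rado_number_two_colors_sum_16_squares_eq_square :
    (∀ χ : ℕ → Fin 2, ∃ (x : Fin 16 → ℕ) (z : ℕ),
      (∀ i, 1 ≤ x i ∧ x i ≤ 17) ∧ 1 ≤ z ∧ z ≤ 17 ∧
      (∀ i, χ (x i) = χ z) ∧ (∑ i, (x i) ^ 2) = z ^ 2) ∧
    (∃ χ : ℕ → Fin 2, ¬ ∃ (x : Fin 16 → ℕ) (z : ℕ),
      (∀ i, 1 ≤ x i ∧ x i ≤ 16) ∧ 1 ≤ z ∧ z ≤ 16 ∧
      (∀ i, χ (x i) = χ z) ∧ (∑ i, (x i) ^ 2) = z ^ 2) := by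
  constructor
  · intro χ
    have two : ∀ a b c : Fin 2, a ≠ b → c ≠ b → c = a := by decide
    by_cases h1 : χ 1 = χ 4
    · exact ⟨fun _ => 1, 4, fun i => by norm_num, by norm_num, by norm_num,
        fun i => h1, by decide⟩
    by_cases h2 : χ 4 = χ 16
    · exact ⟨fun _ => 4, 16, fun i => by norm_num, by norm_num, by norm_num,
        fun i => h2, by decide⟩
    have h16 : χ 16 = χ 1 := two (χ 1) (χ 4) (χ 16) h1 (Ne.symm h2)
    by_cases h3 : χ 7 = χ 1
    · refine ⟨fun i => if (i : ℕ) < 11 then 1 else 7, 16, fun i => by dsimp only; split <;> norm_num,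
        by norm_num, by norm_num, fun i => ?_, by decide⟩
      dsimp only; split
      · exact h16.symm
      · exact h3.trans h16.symm
    have h7 : χ 7 = χ 4 := two (χ 4) (χ 1) (χ 7) (Ne.symm h1) h3
    by_cases h4 : χ 11 = χ 1
    · refine ⟨fun i => if (i : ℕ) < 14 then 1 else 11, 16, fun i => by dsimp only; split <;> norm_num,
        by norm_num, by norm_num, fun i => ?_, by decide⟩
      dsimp only; split
      · exact h16.symm
      · exact h4.trans h16.symm
    have h11 : χ 11 = χ 4 := two (χ 4) (χ 1) (χ 11) (Ne.symm h1) h4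
    by_cases h5 : χ 17 = χ 4
    · refine ⟨fun i => if (i : ℕ) < 15 then 4 else 7, 17, fun i => by dsimp only; split <;> norm_num,
        by norm_num, by norm_num, fun i => ?_, by decide⟩
      dsimp only; split
      · exact h5.symm
      · exact h7.trans h5.symm
    have h17 : χ 17 = χ 1 := two (χ 1) (χ 4) (χ 17) h1 h5
    by_cases h6 : χ 2 = χ 1
    · refine ⟨fun i => if (i : ℕ) < 9 then 1 else if (i : ℕ) < 15 then 2 else 16, 17,
        fun i => by dsimp only; split <;> [norm_num; (split <;> norm_num)],
        by norm_num, by norm_num, fun i => ?_, by decide⟩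
      dsimp only; split
      · exact h17.symm
      · split
        · exact h6.trans h17.symm
        · exact h16.trans h17.symm
    have h2' : χ 2 = χ 4 := two (χ 4) (χ 1) (χ 2) (Ne.symm h1) h6
    refine ⟨fun i => if (i : ℕ) < 14 then 2 else if (i : ℕ) < 15 then 4 else 7, 11,
      fun i => by dsimp only; split <;> [norm_num; (split <;> norm_num)],
      by norm_num, by norm_num, fun i => ?_, by decide⟩
    dsimp only; split
    · exact h2'.trans h11.symm
    · split
      · exact h11.symm
      · exact h7.trans h11.symm
  · refine ⟨fun n => if n = 16 ∨ n ≤ 3 then 0 else 1, ?_⟩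
    rintro ⟨x, z, hx, hz1, hz2, hc, hs⟩
    have key : ∀ n, (if n = 16 ∨ n ≤ 3 then (0 : Fin 2) else 1) = 0 ↔ (n = 16 ∨ n ≤ 3) := by
      intro n; split <;> simp_all
    by_cases hz : z = 16 ∨ z ≤ 3
    · have hxs : ∀ i, x i = 16 ∨ x i ≤ 3 := by
        intro i
        have h := hc i
        dsimp only at h
        rw [(key z).mpr hz] at h
        exact (key (x i)).mp h
      rcases hz with hz | hz
      · subst hz
        by_cases hj : ∃ j, x j = 16
        · obtain ⟨j, hj⟩ := hj
          have hsplit := Finset.add_sum_erase Finset.univ (fun i => (x i) ^ 2) (Finset.mem_univ j)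
          have h15 : 15 ≤ ∑ i ∈ Finset.univ.erase j, (x i) ^ 2 := by
            have hc15 : (Finset.univ.erase j).card = 15 := by
              rw [Finset.card_erase_of_mem (Finset.mem_univ j)]; simp
            calc (15:ℕ) = ∑ _i ∈ Finset.univ.erase j, 1 := by rw [Finset.sum_const, hc15]; simp
              _ ≤ _ := Finset.sum_le_sum (fun i _ => by have := (hx i).1; nlinarith)
          have h256 : (x j) ^ 2 = 256 := by rw [hj]; norm_num
          norm_num at hs
          omega
        · push_neg at hj
          have hle : ∑ i, (x i) ^ 2 ≤ ∑ _i : Fin 16, (9 : ℕ) := by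
            apply Finset.sum_le_sum
            intro i _
            rcases hxs i with h | h
            · exact absurd h (hj i)
            · nlinarith
          simp at hle
          omega
      · have hge : ∑ _i : Fin 16, (1 : ℕ) ≤ ∑ i, (x i) ^ 2 := by
          apply Finset.sum_le_sum
          intro i _
          have := (hx i).1; nlinarith
        simp at hge
        nlinarith
    · have hxs : ∀ i, 4 ≤ x i := by
        intro i
        have h := hc i
        dsimp only at h
        rw [if_neg hz] at h
        by_contra hlt
        push_neg at hlt
        rw [(key (x i)).mpr (Or.inr (by omega))] at h
        exact absurd h (by decide)
      have hge : ∑ _i : Fin 16, (16 : ℕ) ≤ ∑ i, (x i) ^ 2 := by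
        apply Finset.sum_le_sum
        intro i _
        have := hxs i; nlinarith
      simp at hge
      push_neg at hz
      have hz15 : z ≤ 15 := by omega
      nlinarith [hge, hs, hz15]
end
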